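/- Given a graph G on n vertices with adjacency matrix C, a positive integer j, and π in the probability simplex Δ ⊂ ℝⁿ, define B_π = [[I, -(I+C)π], [-πᵀ, 1/j]]. If det(B_π) > 0, then G contains an independent set of size at least j+1. -/

import Mathlib

/-!
By the Schur complement, `det B_π = 1/j - πᵀ(I+C)π`, so it suffices to find an independent
set `s` with `1/|s| ≤ πᵀ(I+C)π`. If two adjacent vertices `a`, `b` both carry mass, moving
all of the mass of `b` onto `a` changes the quadratic form by
`2 π_b (((I+C)π)_a - ((I+C)π)_b)`, because `(e_a - e_b)ᵀ(I+C)(e_a - e_b) = 0`; orienting the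
move so that this is `≤ 0` shrinks the support without increasing the form. Iterating yields
a point `y` of the simplex with independent support `s`, and by Cauchy–Schwarz
`1 = (∑ yᵢ)² ≤ |s| ∑ yᵢ² ≤ |s| yᵀ(I+C)y`.
-/

open Matrix BigOperators

/-- `s` is an independent set of `G`: pairwise non-adjacent vertices. -/
def IsIndepSet {n : ℕ} (G : SimpleGraph (Fin n)) (s : Finset (Fin n)) : Prop :=
  ∀ i ∈ s, ∀ j ∈ s, ¬ G.Adj i j

open Finset

theorem Matrix.det_fromBlocks_one_replicateCol_replicateRow {m R : Type*} [Fintype m]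
    [DecidableEq m] [CommRing R] (u v : m → R) (c : R) :
    (fromBlocks 1 (replicateCol (Fin 1) u) (replicateRow (Fin 1) v) (of fun _ _ => c)).det =
      c - v ⬝ᵥ u := by
  rw [det_fromBlocks_one₁₁, det_fin_one]
  simp [mul_apply, dotProduct]

theorem Matrix.IsSymm.dotProduct_mulVec_comm {n R : Type*} [Fintype n] [CommSemiring R]
    {M : Matrix n n R} (hM : M.IsSymm) (x y : n → R) : x ⬝ᵥ M *ᵥ y = y ⬝ᵥ M *ᵥ x := by
  rw [dotProduct_mulVec, ← vecMul_transpose, hM.eq, dotProduct_comm]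

theorem Matrix.IsSymm.dotProduct_mulVec_add_smul {n R : Type*} [Fintype n] [CommRing R]
    {M : Matrix n n R} (hM : M.IsSymm) (x d : n → R) (t : R) :
    (x + t • d) ⬝ᵥ M *ᵥ (x + t • d) =
      x ⬝ᵥ M *ᵥ x + 2 * t * (d ⬝ᵥ M *ᵥ x) + t ^ 2 * (d ⬝ᵥ M *ᵥ d) := by
  simp only [mulVec_add, mulVec_smul, add_dotProduct, dotProduct_add, smul_dotProduct,
    dotProduct_smul, smul_eq_mul, hM.dotProduct_mulVec_comm x d]
  ring

theorem sq_sum_le_card_support_mul_dotProduct_self {V : Type*} [Fintype V] (x : V → ℝ) :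
    (∑ i, x i) ^ 2 ≤ #{i | x i ≠ 0} * (x ⬝ᵥ x) := by
  have hsq : ∑ i with x i ≠ 0, x i ^ 2 = x ⬝ᵥ x := by
    rw [sum_filter_of_ne fun i _ h => by simpa using h]
    simp only [dotProduct, sq]
  rw [← sum_filter_ne_zero, ← hsq]
  exact sq_sum_le_card_mul_sum_sq

section MassTransfer

variable {V : Type*} [Fintype V] [DecidableEq V]

def moveMass (x : V → ℝ) (b a : V) : V → ℝ := x + x b • (Pi.single a 1 - Pi.single b 1)

variable {x : V → ℝ} {a b : V}

theorem moveMass_mem_stdSimplex (hx : x ∈ stdSimplex ℝ V) (hab : a ≠ b) :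
    moveMass x b a ∈ stdSimplex ℝ V := by
  refine ⟨fun i => ?_, ?_⟩
  · rcases eq_or_ne i b with rfl | hib
    · simp [moveMass, hab]
    · by_cases hia : i = a
      · subst hia
        simpa [moveMass, hab] using add_nonneg (hx.1 i) (hx.1 b)
      · simpa [moveMass, Pi.single_apply, hia, hib] using hx.1 i
  · simp [moveMass, sum_add_distrib, ← mul_sum, sum_sub_distrib, hx.2]

theorem card_support_moveMass_lt (ha : x a ≠ 0) (hb : x b ≠ 0) (hab : a ≠ b) :
    #{i | moveMass x b a i ≠ 0} < #{i | x i ≠ 0} := by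
  refine (card_le_card fun i hi => ?_).trans_lt (card_erase_lt_of_mem (by simpa using hb))
  simp only [mem_filter, mem_univ, true_and, mem_erase] at hi ⊢
  rcases eq_or_ne i b with rfl | hib
  · simp [moveMass, hab] at hi
  · by_cases hia : i = a
    · exact ⟨hib, hia ▸ ha⟩
    · simpa [moveMass, Pi.single_apply, hia, hib] using hi

end MassTransfer

namespace SimpleGraph

variable {V : Type*} [Fintype V] [DecidableEq V] (G : SimpleGraph V) [DecidableRel G.Adj]

theorem dotProduct_self_le_dotProduct_one_add_adjMatrix_mulVec {x : V → ℝ} (hx : 0 ≤ x) :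
    x ⬝ᵥ x ≤ x ⬝ᵥ (1 + G.adjMatrix ℝ) *ᵥ x := by
  rw [add_mulVec, one_mulVec, dotProduct_add, le_add_iff_nonneg_right]
  refine dotProduct_nonneg_of_nonneg hx fun i => sum_nonneg fun k _ => ?_
  exact mul_nonneg (by simp [adjMatrix_apply]; split_ifs <;> norm_num) (hx k)

theorem dotProduct_one_add_adjMatrix_mulVec_moveMass {a b : V} (hab : G.Adj a b) (x : V → ℝ) :
    moveMass x b a ⬝ᵥ (1 + G.adjMatrix ℝ) *ᵥ moveMass x b a =
      x ⬝ᵥ (1 + G.adjMatrix ℝ) *ᵥ x +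
        2 * x b * (((1 + G.adjMatrix ℝ) *ᵥ x) a - ((1 + G.adjMatrix ℝ) *ᵥ x) b) := by
  rw [moveMass, (isSymm_one.add G.isSymm_adjMatrix).dotProduct_mulVec_add_smul]
  simp [mulVec_sub, sub_dotProduct, dotProduct_sub,
    hab, hab.symm, G.ne_of_adj hab, (G.ne_of_adj hab).symm]

theorem exists_isIndepSet_support_dotProduct_le {x : V → ℝ} (hx : x ∈ stdSimplex ℝ V) :
    ∃ y ∈ stdSimplex ℝ V, G.IsIndepSet ({i | y i ≠ 0} : Finset V) ∧
      y ⬝ᵥ (1 + G.adjMatrix ℝ) *ᵥ y ≤ x ⬝ᵥ (1 + G.adjMatrix ℝ) *ᵥ x := by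
  induction h : #{i | x i ≠ 0} using Nat.strong_induction_on generalizing x with
  | _ k ih =>
  by_cases hind : G.IsIndepSet ({i | x i ≠ 0} : Finset V)
  · exact ⟨x, hx, hind, le_rfl⟩
  obtain ⟨a, ha, b, hb, -, hab⟩ : ∃ a, x a ≠ 0 ∧ ∃ b, x b ≠ 0 ∧ a ≠ b ∧ G.Adj a b := by
    simpa [Set.Pairwise] using hind
  obtain ⟨a, b, ha, hb, hab, hle⟩ : ∃ a b, x a ≠ 0 ∧ x b ≠ 0 ∧ G.Adj a b ∧
      ((1 + G.adjMatrix ℝ) *ᵥ x) a ≤ ((1 + G.adjMatrix ℝ) *ᵥ x) b := by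
    rcases le_total (((1 + G.adjMatrix ℝ) *ᵥ x) a) (((1 + G.adjMatrix ℝ) *ᵥ x) b) with h | h
    exacts [⟨a, b, ha, hb, hab, h⟩, ⟨b, a, hb, ha, hab.symm, h⟩]
  obtain ⟨y, hy, hyind, hyle⟩ := ih _ (h ▸ card_support_moveMass_lt ha hb hab.ne)
    (moveMass_mem_stdSimplex hx hab.ne) rfl
  refine ⟨y, hy, hyind, hyle.trans ?_⟩
  rw [dotProduct_one_add_adjMatrix_mulVec_moveMass G hab]
  nlinarith [hx.1 b]

theorem exists_isIndepSet_one_div_card_le {x : V → ℝ} (hx : x ∈ stdSimplex ℝ V) :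
    ∃ s : Finset V, G.IsIndepSet (s : Set V) ∧ 0 < #s ∧
      1 / (#s : ℝ) ≤ x ⬝ᵥ (1 + G.adjMatrix ℝ) *ᵥ x := by
  obtain ⟨y, hy, hind, hle⟩ := G.exists_isIndepSet_support_dotProduct_le hx
  have hsq := sq_sum_le_card_support_mul_dotProduct_self y
  rw [hy.2, one_pow] at hsq
  have hcard : (0 : ℝ) < #{i | y i ≠ 0} :=
    pos_of_mul_pos_left (one_pos.trans_le hsq) (dotProduct_self_star_nonneg y)
  refine ⟨_, hind, by exact_mod_cast hcard, ?_⟩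
  rw [div_le_iff₀ hcard]
  calc 1 ≤ #{i | y i ≠ 0} * (y ⬝ᵥ y) := hsq
    _ ≤ #{i | y i ≠ 0} * (y ⬝ᵥ (1 + G.adjMatrix ℝ) *ᵥ y) := by
      gcongr; exact G.dotProduct_self_le_dotProduct_one_add_adjMatrix_mulVec hy.1
    _ ≤ _ := by rw [mul_comm]; gcongr

end SimpleGraph

theorem det_pos_imp_indep_general (n : ℕ) (G : SimpleGraph (Fin n)) [DecidableRel G.Adj]
    (j : ℕ) (π : Fin n → ℝ) (hπ : π ∈ stdSimplex ℝ (Fin n))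
    (hdet : 0 < (Matrix.fromBlocks (1 : Matrix (Fin n) (Fin n) ℝ)
        (Matrix.of fun i (_ : Fin 1) => -(((1 + G.adjMatrix ℝ) *ᵥ π) i))
        (Matrix.of fun (_ : Fin 1) i => -π i)
        (Matrix.of fun (_ : Fin 1) (_ : Fin 1) => 1 / (j : ℝ))).det) :
    ∃ s : Finset (Fin n), IsIndepSet G s ∧ j + 1 ≤ s.card := by
  have hquad : π ⬝ᵥ (1 + G.adjMatrix ℝ) *ᵥ π < 1 / j := by
    have := hdet.trans_eq (det_fromBlocks_one_replicateCol_replicateRow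
      (-((1 + G.adjMatrix ℝ) *ᵥ π)) (-π) (1 / (j : ℝ)))
    simpa [sub_pos] using this
  obtain ⟨s, hind, hcard, hle⟩ := G.exists_isIndepSet_one_div_card_le hπ
  refine ⟨s, fun a ha b hb hab => ?_, ?_⟩
  · exact hind ha hb (G.ne_of_adj hab) hab
  · exact_mod_cast lt_of_one_div_lt_one_div (by exact_mod_cast hcard) (hle.trans_lt hquad)

/-- With `C` the adjacency matrix of a graph `G` on `n` vertices,
`j` a positive integer, `π` in the probability simplex, and
`B_π = [[I, -(I+C)π], [-πᵀ, 1/j]]`: if `det B_π > 0` then `G` contains an independent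
set of size at least `j + 1`. -/
theorem det_pos_imp_indep (n : ℕ) (G : SimpleGraph (Fin n)) [DecidableRel G.Adj]
    (j : ℕ) (hj : 0 < j) (π : Fin n → ℝ) (hπ : π ∈ stdSimplex ℝ (Fin n))
    (hdet : 0 < (Matrix.fromBlocks (1 : Matrix (Fin n) (Fin n) ℝ)
        (Matrix.of fun i (_ : Fin 1) => -(((1 + G.adjMatrix ℝ) *ᵥ π) i))
        (Matrix.of fun (_ : Fin 1) i => -π i)
        (Matrix.of fun (_ : Fin 1) (_ : Fin 1) => 1 / (j : ℝ))).det) :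
    ∃ s : Finset (Fin n), IsIndepSet G s ∧ j + 1 ≤ s.card :=
  det_pos_imp_indep_general n G j π hπ hdet
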